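/- arXiv:math/0410333 — 2 statements merged into one kernel-verified Lean document; each statement's English description precedes it below -/
import Mathlib

section
/- For any τ in the upper half plane and any real R ≥ 1, the number of pairs of integers (c,d) with R ≤ |cτ+d| < R+1 is at most C(τ)·R for some constant C(τ) depending only on τ. -/
/-!
The lattice points `cτ + d` are `min (Im τ) 1`-separated, so the balls of radius
`ε = min (Im τ) 1 / 2` around those in the annulus `R ≤ |z| < R + 1` are disjoint and lie in the
wider annulus `R - ε ≤ |z| ≤ R + 1 + ε`. Comparing areas bounds their number by
`((R + 1 + ε)² - (R - ε)²) / ε²`, which is linear in `R`.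
-/

open Complex MeasureTheory Measure Metric Module

theorem Finset.card_mul_pow_le_of_pairwise_le_dist {E : Type*} [NormedAddCommGroup E]
    [NormedSpace ℝ E] [FiniteDimensional ℝ E] [Nontrivial E] {s : Finset E} {ε a b : ℝ}
    (hε : 0 < ε) (hεa : ε ≤ a) (hab : a ≤ b)
    (hsep : (s : Set E).Pairwise fun x y => 2 * ε ≤ dist x y)
    (hs : ∀ x ∈ s, a ≤ ‖x‖ ∧ ‖x‖ ≤ b) :
    s.card * ε ^ finrank ℝ E ≤ (b + ε) ^ finrank ℝ E - (a - ε) ^ finrank ℝ E := by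
  borelize E
  set μ : Measure E := addHaar
  have hball : ∀ x : E, ∀ r, 0 ≤ r → μ.real (ball x r) = r ^ finrank ℝ E * μ.real (ball 0 1) :=
    fun x r hr => by
      rw [← addHaar_real_closedBall_eq_addHaar_real_ball, addHaar_real_closedBall μ x hr]
  have hdisj : (s : Set E).PairwiseDisjoint (ball · ε) := fun x hx y hy hxy =>
    ball_disjoint_ball (by linarith [hsep hx hy hxy])
  have hshell : (⋃ x ∈ s, ball x ε) ⊆ closedBall 0 (b + ε) \ ball 0 (a - ε) := by
    simp only [Set.iUnion_subset_iff]
    intro x hx z hz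
    have hzx := mem_ball_iff_norm.1 hz
    have h₁ := norm_le_norm_add_norm_sub' z x
    have h₂ := norm_le_norm_add_norm_sub z x
    simp only [Set.mem_sdiff, mem_closedBall_zero_iff, mem_ball_zero_iff, not_lt]
    constructor <;> linarith [hs x hx]
  have hvol : ∑ x ∈ s, μ.real (ball x ε) + μ.real (ball 0 (a - ε))
      ≤ μ.real (closedBall 0 (b + ε)) := by
    rw [← measureReal_biUnion_finset hdisj (fun _ _ => measurableSet_ball),
      ← measureReal_union (Set.disjoint_sdiff_left.mono_left hshell) measurableSet_ball
        (measure_biUnion_lt_top s.finite_toSet fun _ _ => measure_ball_lt_top).ne]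
    refine measureReal_mono (Set.union_subset (hshell.trans Set.sdiff_subset) ?_)
      measure_closedBall_lt_top.ne
    exact ball_subset_closedBall.trans (closedBall_subset_closedBall (by linarith))
  have hunit : 0 < μ.real (ball (0 : E) 1) :=
    ENNReal.toReal_pos (measure_ball_pos μ 0 one_pos).ne' measure_ball_lt_top.ne
  simp only [hball _ _ hε.le, hball _ _ (sub_nonneg.2 hεa), Finset.sum_const, nsmul_eq_mul,
    addHaar_real_closedBall μ _ (by linarith : 0 ≤ b + ε)] at hvol
  nlinarith

theorem Set.ncard_le_of_forall_finset_card_le {α : Type*} {S : Set α} {N : ℝ}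
    (h : ∀ T : Finset α, ↑T ⊆ S → (T.card : ℝ) ≤ N) : (S.ncard : ℝ) ≤ N := by
  rcases S.finite_or_infinite with hS | hS
  · simpa [Set.ncard_eq_toFinset_card S hS] using h hS.toFinset (by simp)
  · simpa [hS.ncard] using h ∅ (by simp)

theorem Complex.min_im_one_le_norm_intCast_mul_add {τ : ℂ} (hτ : 0 < τ.im) {p : ℤ × ℤ}
    (hp : p ≠ 0) : min τ.im 1 ≤ ‖(p.1 : ℂ) * τ + p.2‖ := by
  by_cases hc : p.1 = 0
  · have hd : p.2 ≠ 0 := fun hd => hp (Prod.ext hc hd)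
    calc min τ.im 1 ≤ 1 := min_le_right _ _
      _ ≤ |(p.2 : ℝ)| := by exact_mod_cast Int.one_le_abs hd
      _ = ‖(p.1 : ℂ) * τ + p.2‖ := by simp [hc]
  · calc min τ.im 1 ≤ τ.im := min_le_left _ _
      _ ≤ |(p.1 : ℝ)| * τ.im := le_mul_of_one_le_left hτ.le (by exact_mod_cast Int.one_le_abs hc)
      _ = |((p.1 : ℂ) * τ + p.2).im| := by simp [abs_mul, abs_of_pos hτ]
      _ ≤ ‖(p.1 : ℂ) * τ + p.2‖ := abs_im_le_norm _

theorem Complex.min_im_one_le_dist_intCast_mul_add {τ : ℂ} (hτ : 0 < τ.im) {p q : ℤ × ℤ}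
    (hpq : p ≠ q) : min τ.im 1 ≤ dist ((p.1 : ℂ) * τ + p.2) ((q.1 : ℂ) * τ + q.2) :=
  calc min τ.im 1 ≤ ‖((p - q).1 : ℂ) * τ + (p - q).2‖ :=
        min_im_one_le_norm_intCast_mul_add hτ (sub_ne_zero.2 hpq)
    _ = dist ((p.1 : ℂ) * τ + p.2) ((q.1 : ℂ) * τ + q.2) := by
        rw [dist_eq_norm, Prod.fst_sub, Prod.snd_sub]
        push_cast
        ring_nf

theorem stmt_1 (τ : ℂ) (hτ : 0 < τ.im) :
    ∃ C : ℝ, ∀ R : ℝ, 1 ≤ R →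
      ((Set.ncard {p : ℤ × ℤ | R ≤ ‖(p.1 : ℂ) * τ + (p.2 : ℂ)‖ ∧
        ‖(p.1 : ℂ) * τ + (p.2 : ℂ)‖ < R + 1} : ℝ)) ≤ C * R := by
  set ε := min τ.im 1 / 2 with hε_def
  have hε : 0 < ε := half_pos (lt_min hτ one_pos)
  have hε_le : ε ≤ 1 / 2 := by rw [hε_def]; linarith [min_le_right τ.im 1]
  refine ⟨6 / ε ^ 2, fun R hR => Set.ncard_le_of_forall_finset_card_le fun T hT => ?_⟩
  set f : ℤ × ℤ → ℂ := fun p => (p.1 : ℂ) * τ + p.2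
  have hsep : ∀ p q, p ≠ q → 2 * ε ≤ dist (f p) (f q) := fun p q hpq => by
    rw [hε_def]; linarith [min_im_one_le_dist_intCast_mul_add hτ hpq]
  have hf : Function.Injective f := fun p q hpq => by
    by_contra hne
    linarith [hsep p q hne, dist_eq_zero.2 hpq]
  have hpack : ((T.image f).card : ℝ) * ε ^ 2 ≤ (R + 1 + ε) ^ 2 - (R - ε) ^ 2 := by
    rw [← finrank_real_complex]
    refine Finset.card_mul_pow_le_of_pairwise_le_dist hε (by linarith) (by linarith) ?_ ?_
    · simp only [Finset.coe_image]
      rintro _ ⟨p, -, rfl⟩ _ ⟨q, -, rfl⟩ hne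
      exact hsep p q (ne_of_apply_ne f hne)
    · simp only [Finset.mem_image]
      rintro _ ⟨p, hp, rfl⟩
      exact ⟨(hT hp).1, (hT hp).2.le⟩
  rw [Finset.card_image_of_injective _ hf] at hpack
  rw [div_mul_eq_mul_div, le_div_iff₀ (by positivity)]
  calc (T.card : ℝ) * ε ^ 2 ≤ (R + 1 + ε) ^ 2 - (R - ε) ^ 2 := hpack
    _ = (1 + 2 * ε) * (2 * R + 1) := by ring
    _ ≤ 6 * R := by nlinarith
end

section
/- For k ≥ 3, the twisted Eisenstein series satisfies E_{k,i;h}(τ) = (1/φ(l)) ∑_{j=1}^{φ(l)} (∑_{t∈(ℤ/lℤ)*} e^{-2πi·ti/l} χ_j^{-1}(t)) L(χ_j, k) Ê_{k,χ_j;h}(τ), where L(χ,k) = ∑_{n≥1, gcd(n,l)=1} χ(n) n^{-k} and Ê_{k,χ;h}(τ) = ∑_{c∈lℤ} ∑_{d∈ℤ, gcd(c,d)=1} (cτ+d)^{-k} χ(d) e^{2πi·Re H(-d/c)}. -/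
open Complex

/-- The phase factor `e^{2πi Re H(-d/c)}`, with the convention `H(-d/0) = 0`. -/
noncomputable def twistPhase (H : ℂ → ℂ) (c d : ℤ) : ℂ :=
  if c = 0 then 1
  else Complex.exp (2 * (Real.pi : ℂ) * Complex.I * (((H (-(d : ℂ) / (c : ℂ))).re : ℂ)))

/-- The `(c,d)` term of the twisted Eisenstein series `E_{k,i;h}`. -/
noncomputable def twistedTerm (l k : ℕ) (i : ℤ) (H : ℂ → ℂ) (τ : ℂ) (p : ℤ × ℤ) : ℂ :=
  if (l : ℤ) ∣ p.1 ∧ Int.gcd p.2 l = 1 then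
    ((p.1 : ℂ) * τ + (p.2 : ℂ)) ^ (-(k : ℤ)) *
      Complex.exp (-(2 * (Real.pi : ℂ) * Complex.I) * (p.2 : ℂ) * (i : ℂ) / (l : ℂ)) *
      twistPhase H p.1 p.2
  else 0

/-- The twisted Eisenstein series `E_{k,i;h}(τ)`, where `H` is the antiderivative of `h`. -/
noncomputable def twistedEis (l k : ℕ) (i : ℤ) (H : ℂ → ℂ) (τ : ℂ) : ℂ :=
  ∑' p : ℤ × ℤ, twistedTerm l k i H τ p

/-- The `(c,d)` term of the auxiliary twisted Eisenstein series `Ê_{k,χ;h}`. -/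
noncomputable def twistedTermHat (l k : ℕ) (χ : DirichletCharacter ℂ l) (H : ℂ → ℂ)
    (τ : ℂ) (p : ℤ × ℤ) : ℂ :=
  if (l : ℤ) ∣ p.1 ∧ Int.gcd p.1 p.2 = 1 then
    ((p.1 : ℂ) * τ + (p.2 : ℂ)) ^ (-(k : ℤ)) * χ (p.2 : ZMod l) * twistPhase H p.1 p.2
  else 0

/-- The auxiliary twisted Eisenstein series `Ê_{k,χ;h}(τ)`. -/
noncomputable def twistedEisHat (l k : ℕ) (χ : DirichletCharacter ℂ l) (H : ℂ → ℂ)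
    (τ : ℂ) : ℂ :=
  ∑' p : ℤ × ℤ, twistedTermHat l k χ H τ p

/-- The Dirichlet L-value `L(χ,k) = ∑_{n ≥ 1, gcd(n,l)=1} χ(n) n^{-k}`. -/
noncomputable def LVal (l k : ℕ) (χ : DirichletCharacter ℂ l) : ℂ :=
  ∑' n : ℕ, if Nat.gcd (n + 1) l = 1 then
    χ ((n + 1 : ℕ) : ZMod l) * ((n : ℂ) + 1) ^ (-(k : ℤ)) else 0

/-!
Multiplying out `L(χ,k) Ê_{k,χ;h}(τ)` gives a series over triples `(n, c, d)` with terms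
`χ((n+1)d) (n+1)^{-k} (cτ+d)^{-k} e^{2πi Re H(-d/c)}`. Summing against the Gauss-sum coefficients,
orthogonality of Dirichlet characters replaces `φ(l)⁻¹ ∑_χ (…) χ((n+1)d)` by `e^{-2πi (n+1)d i/l}`.
Since `H(-d/c)` is unchanged under `(c, d) ↦ (n+1)(c, d)`, the resulting term is the term of
`E_{k,i;h}` at `(n+1)(c, d)`, and every nonzero pair `(c', d')` with `l ∣ c'`, `(d', l) = 1` is
`(n+1)(c, d)` for exactly one primitive `(c, d)`, namely with `n + 1 = gcd(c', d')`.
-/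

lemma twistPhase_mul_mul (H : ℂ → ℂ) {m : ℤ} (hm : m ≠ 0) (c d : ℤ) :
    twistPhase H (m * c) (m * d) = twistPhase H c d := by
  by_cases hc : c = 0
  · simp [twistPhase, hc]
  have hm' : (m : ℂ) ≠ 0 := Int.cast_ne_zero.mpr hm
  simp only [twistPhase, mul_ne_zero hm hc, hc, if_false, Int.cast_mul, ← mul_neg,
    mul_div_mul_left _ _ hm']

lemma norm_twistPhase (H : ℂ → ℂ) (c d : ℤ) : ‖twistPhase H c d‖ = 1 := by
  unfold twistPhase
  split_ifs
  · exact norm_one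
  · rw [show 2 * (Real.pi : ℂ) * I * ((H (-(d : ℂ) / c)).re : ℂ) =
      ((2 * Real.pi * (H (-(d : ℂ) / c)).re : ℝ) : ℂ) * I by push_cast; ring]
    exact norm_exp_ofReal_mul_I _

lemma exp_neg_two_pi_I_mul_intCast_div {l : ℕ} [NeZero l] (m i : ℤ) :
    exp (-(2 * (Real.pi : ℂ) * I) * m * i / l) = ZMod.toCircle (-(m * i : ZMod l)) := by
  rw [← Int.cast_mul, ← Int.cast_neg, ZMod.toCircle_intCast]
  push_cast
  ring_nf

lemma exp_neg_two_pi_I_mul_val_div {l : ℕ} [NeZero l] (a : ZMod l) (i : ℤ) :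
    exp (-(2 * (Real.pi : ℂ) * I) * a.val * i / l) = ZMod.toCircle (-(a * (i : ZMod l))) := by
  rw [← Int.cast_natCast, exp_neg_two_pi_I_mul_intCast_div, Int.cast_natCast, ZMod.natCast_zmod_val]

theorem DirichletCharacter.sum_sum_units_mul_inv_mul_char {R : Type*} [Field R] {n : ℕ}
    [NeZero n] [HasEnoughRootsOfUnity R (Monoid.exponent (ZMod n)ˣ)] (ψ : ZMod n → R)
    (a : ZMod n) :
    ∑ χ : DirichletCharacter R n, (∑ t : (ZMod n)ˣ, ψ t * (χ t)⁻¹) * χ a =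
      if IsUnit a then (n.totient : R) * ψ a else 0 := by
  have hinv (χ : DirichletCharacter R n) (t : (ZMod n)ˣ) : (χ t)⁻¹ = χ (t : ZMod n)⁻¹ := by
    refine inv_eq_of_mul_eq_one_right ?_
    rw [← map_mul, ZMod.mul_inv_of_unit _ t.isUnit, map_one]
  simp_rw [Finset.sum_mul, mul_assoc, hinv]
  rw [Finset.sum_comm]
  simp_rw [← Finset.mul_sum, sum_char_inv_mul_char_eq R (Units.isUnit _)]
  split_ifs with ha
  · obtain ⟨u, rfl⟩ := ha
    simp [Units.val_inj, mul_comm]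
  · refine Finset.sum_eq_zero fun t _ => ?_
    rw [if_neg (fun h : (t : ZMod n) = a => ha (h ▸ t.isUnit)), mul_zero]

lemma summable_norm_mul_add_zpow {k : ℕ} (hk : 3 ≤ k) {τ : ℂ} (hτ : 0 < τ.im) :
    Summable fun p : ℤ × ℤ => ‖((p.1 : ℂ) * τ + p.2) ^ (-(k : ℤ))‖ :=
  (finTwoArrowEquiv ℤ).symm.summable_iff.mpr <|
    EisensteinSeries.summable_norm_eisSummand (k := k) (by exact_mod_cast hk) ⟨τ, hτ⟩

noncomputable def LValTerm (l k : ℕ) (χ : DirichletCharacter ℂ l) (n : ℕ) : ℂ :=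
  if Nat.gcd (n + 1) l = 1 then χ ((n + 1 : ℕ) : ZMod l) * ((n : ℂ) + 1) ^ (-(k : ℤ)) else 0

lemma LVal_eq_tsum_LValTerm (l k : ℕ) (χ : DirichletCharacter ℂ l) :
    LVal l k χ = ∑' n, LValTerm l k χ n := rfl

lemma summable_norm_LValTerm (l : ℕ) {k : ℕ} (hk : 2 ≤ k) (χ : DirichletCharacter ℂ l) :
    Summable fun n => ‖LValTerm l k χ n‖ := by
  have hpow : Summable fun n : ℕ => 1 / ((n + 1 : ℕ) : ℝ) ^ k :=
    (summable_nat_add_iff 1).mpr (Real.summable_one_div_nat_pow.mpr hk)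
  refine hpow.of_nonneg_of_le (fun _ => norm_nonneg _) fun n => ?_
  unfold LValTerm
  split_ifs
  · rw [norm_mul, norm_zpow, zpow_neg, zpow_natCast, ← one_div,
      show (n : ℂ) + 1 = ((n + 1 : ℕ) : ℂ) by push_cast; rfl, Complex.norm_natCast]
    exact mul_le_of_le_one_left (by positivity) (χ.norm_le_one _)
  · rw [norm_zero]
    positivity

lemma summable_norm_twistedTermHat {l k : ℕ} (hk : 3 ≤ k) (χ : DirichletCharacter ℂ l)
    (H : ℂ → ℂ) {τ : ℂ} (hτ : 0 < τ.im) :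
    Summable fun p => ‖twistedTermHat l k χ H τ p‖ := by
  refine (summable_norm_mul_add_zpow hk hτ).of_nonneg_of_le (fun _ => norm_nonneg _) fun p => ?_
  unfold twistedTermHat
  split_ifs
  · rw [norm_mul, norm_mul, norm_twistPhase, mul_one]
    exact mul_le_of_le_one_right (norm_nonneg _) (χ.norm_le_one _)
  · rw [norm_zero]
    positivity

lemma Int.gcd_eq_one_of_dvd_of_gcd_eq_one {l c d : ℤ} (hlc : l ∣ c) (hcd : Int.gcd c d = 1) :
    Int.gcd d l = 1 :=
  Int.isCoprime_iff_gcd_eq_one.mp <|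
    (Int.isCoprime_iff_gcd_eq_one.mpr hcd).symm.of_isCoprime_of_dvd_right hlc

lemma ZMod.isUnit_intCast_of_gcd_eq_one {l : ℕ} {d : ℤ} (h : Int.gcd d l = 1) :
    IsUnit (d : ZMod l) := by
  have := (Int.isCoprime_iff_gcd_eq_one.mpr h).map (Int.castRingHom (ZMod l))
  rwa [map_natCast, ZMod.natCast_self, isCoprime_zero_right] at this

/-- `(n, c, d)` stands for the pair `(n + 1) • (c, d)`; every pair in the support of `twistedTerm`
arises from exactly one such triple. -/
def primitiveTriples (l : ℕ) : Set (ℕ × ℤ × ℤ) :=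
  {q | Nat.gcd (q.1 + 1) l = 1 ∧ (l : ℤ) ∣ q.2.1 ∧ Int.gcd q.2.1 q.2.2 = 1}

def scaleTriple (q : ℕ × ℤ × ℤ) : ℤ × ℤ := ((q.1 : ℤ) + 1) • q.2

lemma dvd_and_gcd_scaleTriple {l : ℕ} {q : ℕ × ℤ × ℤ} (hq : q ∈ primitiveTriples l) :
    (l : ℤ) ∣ (scaleTriple q).1 ∧ Int.gcd (scaleTriple q).2 l = 1 := by
  obtain ⟨n, c, d⟩ := q
  obtain ⟨hn, hc, hcd⟩ := hq
  refine ⟨Dvd.dvd.mul_left hc _, Int.isCoprime_iff_gcd_eq_one.mp ?_⟩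
  have hn' : IsCoprime ((n + 1 : ℕ) : ℤ) l := Nat.isCoprime_iff_coprime.mpr hn
  push_cast at hn'
  exact hn'.mul_left <|
    Int.isCoprime_iff_gcd_eq_one.mpr (Int.gcd_eq_one_of_dvd_of_gcd_eq_one hc hcd)

lemma scaleTriple_injOn :
    Set.InjOn scaleTriple {q : ℕ × ℤ × ℤ | Int.gcd q.2.1 q.2.2 = 1} := by
  rintro ⟨n, c, d⟩ hq ⟨n', c', d'⟩ hq' h
  simp only [scaleTriple, Prod.smul_mk, smul_eq_mul, Prod.mk.injEq] at h
  have hn : n = n' := by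
    have := congrArg₂ Int.gcd h.1 h.2
    rw [Int.gcd_mul_left, Int.gcd_mul_left, hq, hq'] at this
    omega
  subst hn
  have hne : (n : ℤ) + 1 ≠ 0 := by omega
  rw [mul_right_inj' hne, mul_right_inj' hne] at h
  rw [h.1, h.2]

lemma exists_scaleTriple_eq {l : ℕ} {p : ℤ × ℤ} (hc : (l : ℤ) ∣ p.1) (hd : Int.gcd p.2 l = 1)
    (hp : p ≠ 0) : ∃ q ∈ primitiveTriples l, scaleTriple q = p := by
  obtain ⟨c, d⟩ := p
  have hpos : 0 < Int.gcd c d :=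
    Int.gcd_pos_iff.mpr (by simpa [Prod.ext_iff, or_iff_not_imp_left] using hp)
  obtain ⟨g, c', d', hg, hcd', rfl, rfl⟩ := Int.exists_gcd_one' hpos
  have hgl : IsCoprime (g : ℤ) l := (Int.isCoprime_iff_gcd_eq_one.mpr hd).of_mul_left_right
  have hg1 : ((g - 1 : ℕ) : ℤ) + 1 = g := by omega
  refine ⟨(g - 1, c', d'), ⟨?_, hgl.symm.dvd_of_dvd_mul_right hc, hcd'⟩, ?_⟩
  · rw [Nat.sub_add_cancel hg]
    exact Nat.isCoprime_iff_coprime.mp hgl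
  · simp only [scaleTriple, hg1, Prod.smul_mk, smul_eq_mul, mul_comm]

lemma tsum_indicator_primitiveTriples_comp_scaleTriple {α : Type*} [AddCommMonoid α]
    [TopologicalSpace α] {l : ℕ} {f : ℤ × ℤ → α}
    (hf : ∀ p, f p ≠ 0 → (l : ℤ) ∣ p.1 ∧ Int.gcd p.2 l = 1 ∧ p ≠ 0) :
    ∑' q, (primitiveTriples l).indicator (fun q => f (scaleTriple q)) q = ∑' p, f p := by
  rw [← tsum_subtype, ← tsum_image f (scaleTriple_injOn.mono fun _ hq => hq.2.2),
    tsum_subtype_eq_of_support_subset]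
  intro p hp
  obtain ⟨hc, hd, hp0⟩ := hf p hp
  exact exists_scaleTriple_eq hc hd hp0

lemma dvd_and_gcd_of_twistedTerm_ne_zero {l k : ℕ} (hk : k ≠ 0) {i : ℤ} {H : ℂ → ℂ} {τ : ℂ}
    {p : ℤ × ℤ} (h : twistedTerm l k i H τ p ≠ 0) : (l : ℤ) ∣ p.1 ∧ Int.gcd p.2 l = 1 ∧ p ≠ 0 := by
  unfold twistedTerm at h
  split_ifs at h with hp
  · refine ⟨hp.1, hp.2, ?_⟩
    rintro rfl
    simp [hk] at h
  · exact absurd rfl h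

lemma twistedTerm_scaleTriple {l : ℕ} [NeZero l] (k : ℕ) (i : ℤ) (H : ℂ → ℂ) (τ : ℂ)
    {n : ℕ} {c d : ℤ} (hq : (n, c, d) ∈ primitiveTriples l) :
    twistedTerm l k i H τ (scaleTriple (n, c, d)) =
      ZMod.toCircle (-(((((n : ℤ) + 1) * d : ℤ) : ZMod l) * (i : ZMod l))) *
        (((n : ℂ) + 1) ^ (-(k : ℤ)) * ((c : ℂ) * τ + d) ^ (-(k : ℤ)) * twistPhase H c d) := by
  rw [twistedTerm, if_pos (dvd_and_gcd_scaleTriple hq)]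
  simp only [scaleTriple, Prod.smul_mk, smul_eq_mul]
  rw [twistPhase_mul_mul H (by omega), ← exp_neg_two_pi_I_mul_intCast_div,
    show (((n + 1) * c : ℤ) : ℂ) * τ + (((n + 1) * d : ℤ) : ℂ) = ((n : ℂ) + 1) * (c * τ + d) by
      push_cast; ring, mul_zpow]
  push_cast
  ring

lemma LValTerm_mul_twistedTermHat_of_mem {l : ℕ} (k : ℕ) (χ : DirichletCharacter ℂ l)
    (H : ℂ → ℂ) (τ : ℂ) {n : ℕ} {c d : ℤ} (hq : (n, c, d) ∈ primitiveTriples l) :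
    LValTerm l k χ n * twistedTermHat l k χ H τ (c, d) =
      χ ((((n : ℤ) + 1) * d : ℤ) : ZMod l) *
        (((n : ℂ) + 1) ^ (-(k : ℤ)) * ((c : ℂ) * τ + d) ^ (-(k : ℤ)) * twistPhase H c d) := by
  obtain ⟨hn, hcd⟩ := hq
  rw [LValTerm, twistedTermHat, if_pos hn, if_pos hcd]
  push_cast
  rw [map_mul]
  ring

lemma LValTerm_mul_twistedTermHat_of_notMem {l : ℕ} (k : ℕ) (χ : DirichletCharacter ℂ l)
    (H : ℂ → ℂ) (τ : ℂ) {n : ℕ} {c d : ℤ} (hq : (n, c, d) ∉ primitiveTriples l) :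
    LValTerm l k χ n * twistedTermHat l k χ H τ (c, d) = 0 := by
  rw [LValTerm, twistedTermHat]
  split_ifs with hn hcd
  · exact absurd ⟨hn, hcd⟩ hq
  all_goals simp

/-- The coefficient `∑_{t ∈ (ℤ/lℤ)ˣ} e^{-2πi t i / l} χ⁻¹(t)` of `L(χ,k) Ê_{k,χ;h}(τ)`. -/
noncomputable def gaussCoeff (l : ℕ) [NeZero l] (i : ℤ) (χ : DirichletCharacter ℂ l) : ℂ :=
  ∑ t : (ZMod l)ˣ, (ZMod.toCircle (-((t : ZMod l) * (i : ZMod l))) : ℂ) * (χ t)⁻¹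

lemma sum_gaussCoeff_mul_LValTerm_mul_twistedTermHat {l : ℕ} [NeZero l] (k : ℕ) (i : ℤ)
    (H : ℂ → ℂ) (τ : ℂ) (q : ℕ × ℤ × ℤ) :
    ∑ χ : DirichletCharacter ℂ l,
        gaussCoeff l i χ * (LValTerm l k χ q.1 * twistedTermHat l k χ H τ q.2) =
      (primitiveTriples l).indicator
        (fun q => (l.totient : ℂ) * twistedTerm l k i H τ (scaleTriple q)) q := by
  obtain ⟨n, c, d⟩ := q
  by_cases hq : (n, c, d) ∈ primitiveTriples l
  · rw [Set.indicator_of_mem hq, twistedTerm_scaleTriple k i H τ hq]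
    simp_rw [LValTerm_mul_twistedTermHat_of_mem k _ H τ hq, ← mul_assoc, ← Finset.sum_mul,
      gaussCoeff, DirichletCharacter.sum_sum_units_mul_inv_mul_char
        (fun a => (ZMod.toCircle (-(a * (i : ZMod l))) : ℂ)),
      if_pos <| ZMod.isUnit_intCast_of_gcd_eq_one (d := (n + 1) * d)
        (dvd_and_gcd_scaleTriple hq).2]
  · simp [LValTerm_mul_twistedTermHat_of_notMem k _ H τ hq, hq]

theorem sum_gaussCoeff_mul_LVal_mul_twistedEisHat {l k : ℕ} [NeZero l] (hk : 3 ≤ k) (i : ℤ)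
    (H : ℂ → ℂ) {τ : ℂ} (hτ : 0 < τ.im) :
    ∑ χ : DirichletCharacter ℂ l, gaussCoeff l i χ * LVal l k χ * twistedEisHat l k χ H τ =
      l.totient * twistedEis l k i H τ := by
  have hL (χ : DirichletCharacter ℂ l) := summable_norm_LValTerm l (by omega : 2 ≤ k) χ
  have hHat (χ : DirichletCharacter ℂ l) := summable_norm_twistedTermHat hk χ H hτ
  calc _ = ∑' q : ℕ × ℤ × ℤ, ∑ χ : DirichletCharacter ℂ l,
        gaussCoeff l i χ * (LValTerm l k χ q.1 * twistedTermHat l k χ H τ q.2) := by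
        rw [Summable.tsum_finsetSum fun χ _ =>
          (summable_mul_of_summable_norm (hL χ) (hHat χ)).mul_left _]
        refine Finset.sum_congr rfl fun χ _ => ?_
        rw [mul_assoc, LVal_eq_tsum_LValTerm, twistedEisHat,
          tsum_mul_tsum_of_summable_norm (hL χ) (hHat χ), tsum_mul_left]
    _ = ∑' p, (l.totient : ℂ) * twistedTerm l k i H τ p := by
        simp_rw [sum_gaussCoeff_mul_LValTerm_mul_twistedTermHat]
        exact tsum_indicator_primitiveTriples_comp_scaleTriple fun p hp =>
          dvd_and_gcd_of_twistedTerm_ne_zero (by omega) (right_ne_zero_of_mul hp)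
    _ = _ := tsum_mul_left

theorem stmt_8_general (l k : ℕ) [NeZero l] (hk : 3 ≤ k) (i : ℤ) (H : ℂ → ℂ)
    (τ : ℂ) (hτ : 0 < τ.im) :
    twistedEis l k i H τ =
      (1 / (Nat.totient l : ℂ)) * ∑ χ : DirichletCharacter ℂ l,
        (∑ t : (ZMod l)ˣ,
          Complex.exp (-(2 * (Real.pi : ℂ) * Complex.I) * ((t : ZMod l).val : ℂ) * (i : ℂ) / (l : ℂ)) *
            (χ (t : ZMod l))⁻¹) *
        LVal l k χ * twistedEisHat l k χ H τ := by
  have htotient : (l.totient : ℂ) ≠ 0 :=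
    Nat.cast_ne_zero.mpr (Nat.totient_pos.mpr l.pos_of_neZero).ne'
  have hcoeff (χ : DirichletCharacter ℂ l) : ∑ t : (ZMod l)ˣ,
      exp (-(2 * (Real.pi : ℂ) * I) * ((t : ZMod l).val : ℂ) * i / l) * (χ t)⁻¹ =
        gaussCoeff l i χ := by
    simp_rw [gaussCoeff, exp_neg_two_pi_I_mul_val_div]
  simp_rw [hcoeff, sum_gaussCoeff_mul_LVal_mul_twistedEisHat hk i H hτ]
  field_simp

theorem stmt_8 (l k : ℕ) (hl : 0 < l) [NeZero l] (hk : 3 ≤ k) (i : ℤ) (H : ℂ → ℂ)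
    (τ : ℂ) (hτ : 0 < τ.im) :
    twistedEis l k i H τ =
      (1 / (Nat.totient l : ℂ)) * ∑ χ : DirichletCharacter ℂ l,
        (∑ t : (ZMod l)ˣ,
          Complex.exp (-(2 * (Real.pi : ℂ) * Complex.I) * ((t : ZMod l).val : ℂ) * (i : ℂ) / (l : ℂ)) *
            (χ (t : ZMod l))⁻¹) *
        LVal l k χ * twistedEisHat l k χ H τ :=
  stmt_8_general l k hk i H τ hτ
end
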